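/- (Lemma 2.2, interior part.) Let Π ∈ M_n(ℂ) be a Hermitian unitary matrix (Π* = Π and Π² = 1). Let f : 𝕋 → M_n(ℂ) satisfy Π f(z) Π = −f(z) for every z ∈ 𝕋, and let (f₋, f₊) be a right canonical factorization datum for f. Then Π · (f₋(z̄) f₊(z)) · Π = −f₋(z̄) f₊(z) for every z in the closed unit disk 𝔻̄; that is, the interior extension f^e of f anticommutes with Π at every point of 𝔻̄. -/

import Mathlib

open Complex Matrix

/-- The closed unit disk in `ℂ`. -/
def closedDisk : Set ℂ := {z : ℂ | ‖z‖ ≤ 1}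

/-- The open unit disk in `ℂ`. -/
def openDisk : Set ℂ := {z : ℂ | ‖z‖ < 1}

/-- A right canonical factorization datum for `f : 𝕋 → Mₙ(ℂ)`: a pair `(fm, fp)` of maps on the
closed unit disk, continuous there, holomorphic on the open disk, taking invertible values, with
`f z = fm z̄ * fp z` on the unit circle. -/
structure RightCanonicalFactorizationDatum (n : ℕ)
    (f fm fp : ℂ → Matrix (Fin n) (Fin n) ℂ) : Prop where
  cont_m : ContinuousOn fm closedDisk
  cont_p : ContinuousOn fp closedDisk
  hol_m : ∀ i j, DifferentiableOn ℂ (fun z => fm z i j) openDisk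
  hol_p : ∀ i j, DifferentiableOn ℂ (fun z => fp z i j) openDisk
  unit_m : ∀ z ∈ closedDisk, IsUnit (fm z)
  unit_p : ∀ z ∈ closedDisk, IsUnit (fp z)
  factor : ∀ z : ℂ, ‖z‖ = 1 → f z = fm (starRingEnd ℂ z) * fp z

/-!
On the circle, `P f₋(z̄) f₊(z) P = -f₋(z̄) f₊(z)` rearranges (using `P² = 1`) to `G(z̄) = H(z)`
with `G = f₋⁻¹ P f₋` and `H = -f₊ P f₊⁻¹`, both holomorphic in the disk and continuous up to the
circle. A holomorphic function agreeing on the circle with an antiholomorphic one is constant: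
entrywise, `H + conj ∘ G ∘ conj` and `i (H - conj ∘ G ∘ conj)` have real boundary values, so by
the maximum principle applied to `exp (± i ·)` they are real throughout, hence constant by the
open mapping theorem. So `G(z̄) = H(z)` on the whole closed disk, which rearranges back to the
claim.
-/

open Metric Set Bornology
-- Any norm would do: it only serves to differentiate matrix products and inverses.
open scoped ComplexConjugate Matrix.Norms.Operator

section

variable {E : Type*} [NormedAddCommGroup E] [NormedSpace ℂ E] [Nontrivial E]
  {U : Set E} {f : E → ℂ}

theorem Complex.re_le_of_forall_mem_frontier_re_le (hU : IsBounded U) (hf : DiffContOnCl ℂ f U)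
    {C : ℝ} (hC : ∀ z ∈ frontier U, (f z).re ≤ C) {z : E} (hz : z ∈ closure U) :
    (f z).re ≤ C := by
  have hexp : DiffContOnCl ℂ (fun z => exp (f z)) U := differentiable_exp.comp_diffContOnCl hf
  have := Complex.norm_le_of_forall_mem_frontier_norm_le hU hexp (C := Real.exp C)
    (fun w hw => by simpa [norm_exp] using hC w hw) hz
  simpa [norm_exp] using this

theorem Complex.im_eq_zero_of_forall_mem_frontier_im_eq_zero (hU : IsBounded U)
    (hf : DiffContOnCl ℂ f U) (h : ∀ z ∈ frontier U, (f z).im = 0) {z : E}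
    (hz : z ∈ closure U) : (f z).im = 0 := by
  have hle : (f z).im ≤ 0 := by
    simpa using re_le_of_forall_mem_frontier_re_le hU (hf.const_smul (-I)) (C := 0)
      (fun w hw => by simp [h w hw]) hz
  have hge : 0 ≤ (f z).im := by
    simpa using re_le_of_forall_mem_frontier_re_le hU (hf.const_smul I) (C := 0)
      (fun w hw => by simp [h w hw]) hz
  exact le_antisymm hle hge

end

section

variable {f : ℂ → ℂ} {U : Set ℂ}

theorem DifferentiableOn.exists_const_of_im_eq_zero (hf : DifferentiableOn ℂ f U)
    (hU : IsOpen U) (hU' : IsPreconnected U) (him : ∀ z ∈ U, (f z).im = 0) :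
    ∃ c, ∀ z ∈ U, f z = c := by
  rcases (hf.analyticOnNhd hU).is_constant_or_isOpen hU' with hconst | hopen
  · exact hconst
  · have himage : f '' U ⊆ interior (im ⁻¹' {0}) :=
      (hopen U subset_rfl hU).subset_interior_iff.2 (image_subset_iff.2 him)
    rw [interior_preimage_im, interior_singleton, preimage_empty, subset_empty_iff,
      image_eq_empty] at himage
    exact ⟨0, by simp [himage]⟩

theorem DiffContOnCl.exists_const_on_closure_of_frontier_im_eq_zero (hf : DiffContOnCl ℂ f U)
    (hb : IsBounded U) (ho : IsOpen U) (hc : IsPreconnected U)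
    (h : ∀ z ∈ frontier U, (f z).im = 0) : ∃ c, ∀ z ∈ closure U, f z = c := by
  obtain ⟨c, hfc⟩ := hf.differentiableOn.exists_const_of_im_eq_zero ho hc fun z hz =>
    Complex.im_eq_zero_of_forall_mem_frontier_im_eq_zero hb hf h (subset_closure hz)
  exact ⟨c, EqOn.of_subset_closure hfc hf.continuousOn continuousOn_const subset_closure
    subset_rfl⟩

theorem DiffContOnCl.conj_conj (hf : DiffContOnCl ℂ f U) (hU : IsOpen U)
    (hconj : MapsTo conj U U) : DiffContOnCl ℂ (conj ∘ f ∘ conj) U := by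
  refine ⟨fun z hz => ?_, ?_⟩
  · have := (hf.differentiableAt hU (hconj hz)).conj_conj
    rw [Complex.conj_conj] at this
    exact this.differentiableWithinAt
  · exact continuous_conj.comp_continuousOn
      (hf.continuousOn.comp continuous_conj.continuousOn (hconj.closure continuous_conj))

theorem DiffContOnCl.exists_const_on_closedBall_of_sphere_im_eq_zero
    (hf : DiffContOnCl ℂ f (ball 0 1)) (h : ∀ z ∈ sphere (0 : ℂ) 1, (f z).im = 0) :
    ∃ c, ∀ z ∈ closedBall (0 : ℂ) 1, f z = c := by
  rw [← closure_ball 0 one_ne_zero]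
  refine hf.exists_const_on_closure_of_frontier_im_eq_zero isBounded_ball isOpen_ball
    (convex_ball 0 1).isPreconnected ?_
  rwa [frontier_ball 0 one_ne_zero]

end

theorem exists_const_of_eq_conj_on_sphere {v w : ℂ → ℂ} (hv : DiffContOnCl ℂ v (ball 0 1))
    (hw : DiffContOnCl ℂ w (ball 0 1)) (h : ∀ z ∈ sphere (0 : ℂ) 1, v z = conj (w z)) :
    ∃ c, ∀ z ∈ closedBall (0 : ℂ) 1, v z = c ∧ w z = conj c := by
  obtain ⟨a, ha⟩ := (hv.add hw).exists_const_on_closedBall_of_sphere_im_eq_zero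
    fun z hz => by simp [h z hz]
  obtain ⟨b, hb⟩ := ((hv.sub hw).const_smul I).exists_const_on_closedBall_of_sphere_im_eq_zero
    fun z hz => by simp [h z hz]
  have h1 : (1 : ℂ) ∈ closedBall (0 : ℂ) 1 := by simp
  refine ⟨v 1, fun z hz => ?_⟩
  have hsum : v z + w z = v 1 + w 1 := (ha z hz).trans (ha 1 h1).symm
  have hdiff : v z - w z = v 1 - w 1 :=
    mul_left_cancel₀ I_ne_zero ((hb z hz).trans (hb 1 h1).symm)
  have hw1 : w 1 = conj (v 1) := by rw [h 1 (by simp), Complex.conj_conj]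
  constructor
  · linear_combination (hsum + hdiff) / 2
  · rw [← hw1]
    linear_combination (hsum - hdiff) / 2

section

variable {E : Type*} [NormedAddCommGroup E] [NormedSpace ℂ E] {s : Set E}

theorem Matrix.differentiableOn_iff {m n : Type*} [Fintype m] [Fintype n]
    {A : E → Matrix m n ℂ} :
    DifferentiableOn ℂ A s ↔ ∀ i j, DifferentiableOn ℂ (fun z => A z i j) s := by
  let e : Matrix m n ℂ ≃L[ℂ] (m → n → ℂ) :=
    (Matrix.ofLinearEquiv ℂ).symm.toContinuousLinearEquiv
  refine e.comp_differentiableOn_iff.symm.trans ?_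
  simp only [differentiableOn_pi]
  rfl

theorem Matrix.diffContOnCl_iff {m n : Type*} [Fintype m] [Fintype n] {A : E → Matrix m n ℂ} :
    DiffContOnCl ℂ A s ↔ ∀ i j, DiffContOnCl ℂ (fun z => A z i j) s := by
  refine ⟨fun h i j => ⟨?_, ?_⟩, fun h => ⟨?_, ?_⟩⟩
  · exact Matrix.differentiableOn_iff.1 h.1 i j
  · exact continuousOn_pi.1 (continuousOn_pi.1 h.2 i) j
  · exact Matrix.differentiableOn_iff.2 fun i j => (h i j).1
  · exact continuousOn_pi.2 fun i => continuousOn_pi.2 fun j => (h i j).2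

theorem DiffContOnCl.mul {𝔸 : Type*} [NormedRing 𝔸] [NormedAlgebra ℂ 𝔸] {f g : E → 𝔸}
    (hf : DiffContOnCl ℂ f s) (hg : DiffContOnCl ℂ g s) :
    DiffContOnCl ℂ (fun z => f z * g z) s :=
  ⟨hf.1.mul hg.1, hf.2.mul hg.2⟩

theorem DiffContOnCl.matrix_inv {m : Type*} [Fintype m] [DecidableEq m] {A : E → Matrix m m ℂ}
    (hA : DiffContOnCl ℂ A s) (hunit : ∀ z ∈ closure s, IsUnit (A z)) :
    DiffContOnCl ℂ (fun z => (A z)⁻¹) s := by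
  simp only [Matrix.nonsing_inv_eq_ringInverse]
  refine ⟨hA.1.inverse fun z hz => hunit z (subset_closure hz), fun z hz => ?_⟩
  have hinv := NormedRing.inverse_continuousAt (hunit z hz).unit
  rw [IsUnit.unit_spec] at hinv
  exact hinv.comp_continuousWithinAt (hA.2 z hz)

end

theorem Matrix.exists_const_of_eq_comp_conj_on_sphere {m n : Type*} [Fintype m] [Fintype n]
    {G H : ℂ → Matrix m n ℂ} (hG : DiffContOnCl ℂ G (ball 0 1))
    (hH : DiffContOnCl ℂ H (ball 0 1)) (h : ∀ z ∈ sphere (0 : ℂ) 1, H z = G (conj z)) :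
    ∃ C, ∀ z ∈ closedBall (0 : ℂ) 1, G z = C ∧ H z = C := by
  have hconj : MapsTo conj (ball (0 : ℂ) 1) (ball 0 1) := fun z hz => by simpa using hz
  have hentry (i : m) (j : n) : ∃ c, ∀ z ∈ closedBall (0 : ℂ) 1,
      H z i j = c ∧ conj (G (conj z) i j) = conj c :=
    exists_const_of_eq_conj_on_sphere (Matrix.diffContOnCl_iff.1 hH i j)
      ((Matrix.diffContOnCl_iff.1 hG i j).conj_conj isOpen_ball hconj)
      fun z hz => by simp [h z hz]
  choose c hc using hentry
  refine ⟨Matrix.of c, fun z hz => ⟨Matrix.ext fun i j => ?_,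
    Matrix.ext fun i j => (hc i j z hz).1⟩⟩
  exact (starRingEnd ℂ).injective (by simpa using (hc i j (conj z) (by simpa using hz)).2)

theorem Matrix.mul_mul_eq_neg_iff_inv_mul_mul_eq_neg {m R : Type*} [Fintype m] [DecidableEq m]
    [CommRing R] {P A B : Matrix m m R} (hP : P * P = 1) (hA : IsUnit A) (hB : IsUnit B) :
    P * (A * B) * P = -(A * B) ↔ A⁻¹ * P * A = -(B * P * B⁻¹) := by
  rw [isUnit_iff_isUnit_det] at hA hB
  constructor
  · intro h
    calc A⁻¹ * P * A = A⁻¹ * (P * (A * B) * P) * P * B⁻¹ := by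
          simp only [mul_assoc, hP, mul_one, mul_nonsing_inv B hB]
      _ = -(B * P * B⁻¹) := by
          rw [h]; simp only [mul_neg, neg_mul, ← mul_assoc, nonsing_inv_mul A hA, one_mul]
  · intro h
    calc P * (A * B) * P = A * (A⁻¹ * P * A) * B * P := by
          simp only [← mul_assoc, mul_nonsing_inv A hA, one_mul]
      _ = -(A * B) := by
          rw [h]; simp only [mul_neg, neg_mul, mul_assoc, nonsing_inv_mul B hB, mul_one, hP]

theorem closedDisk_eq_closedBall : closedDisk = closedBall (0 : ℂ) 1 := by
  ext z; simp [closedDisk]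

theorem openDisk_eq_ball : openDisk = ball (0 : ℂ) 1 := by
  ext z; simp [openDisk]

namespace RightCanonicalFactorizationDatum

variable {n : ℕ} {f fm fp : ℂ → Matrix (Fin n) (Fin n) ℂ}

theorem diffContOnCl_minus (hf : RightCanonicalFactorizationDatum n f fm fp) :
    DiffContOnCl ℂ fm (ball 0 1) := by
  refine ⟨Matrix.differentiableOn_iff.2 ?_, ?_⟩
  · simpa only [openDisk_eq_ball] using hf.hol_m
  · rw [closure_ball (0 : ℂ) one_ne_zero, ← closedDisk_eq_closedBall]
    exact hf.cont_m

theorem diffContOnCl_plus (hf : RightCanonicalFactorizationDatum n f fm fp) :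
    DiffContOnCl ℂ fp (ball 0 1) := by
  refine ⟨Matrix.differentiableOn_iff.2 ?_, ?_⟩
  · simpa only [openDisk_eq_ball] using hf.hol_p
  · rw [closure_ball (0 : ℂ) one_ne_zero, ← closedDisk_eq_closedBall]
    exact hf.cont_p

end RightCanonicalFactorizationDatum

theorem interior_extension_anticommutes_with_chiral_symmetry_general
    {n : ℕ} (P : Matrix (Fin n) (Fin n) ℂ)
    (hP2 : P * P = 1)
    (f fm fp : ℂ → Matrix (Fin n) (Fin n) ℂ)
    (hchiral : ∀ z : ℂ, ‖z‖ = 1 → P * f z * P = -(f z))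
    (hf : RightCanonicalFactorizationDatum n f fm fp) :
    ∀ z ∈ closedDisk,
      P * (fm (starRingEnd ℂ z) * fp z) * P = -(fm (starRingEnd ℂ z) * fp z) := by
  rw [closedDisk_eq_closedBall]
  have hconj {z : ℂ} (hz : z ∈ closedBall (0 : ℂ) 1) : conj z ∈ closedBall (0 : ℂ) 1 := by
    simpa using hz
  have hunit_m : ∀ z ∈ closedBall (0 : ℂ) 1, IsUnit (fm z) := by
    simpa only [closedDisk_eq_closedBall] using hf.unit_m
  have hunit_p : ∀ z ∈ closedBall (0 : ℂ) 1, IsUnit (fp z) := by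
    simpa only [closedDisk_eq_closedBall] using hf.unit_p
  have key {z : ℂ} (hz : z ∈ closedBall (0 : ℂ) 1) :=
    Matrix.mul_mul_eq_neg_iff_inv_mul_mul_eq_neg hP2 (hunit_m _ (hconj hz)) (hunit_p z hz)
  rw [← closure_ball (0 : ℂ) one_ne_zero] at hunit_m hunit_p
  have hG : DiffContOnCl ℂ (fun w => (fm w)⁻¹ * P * fm w) (ball 0 1) :=
    ((hf.diffContOnCl_minus.matrix_inv hunit_m).mul diffContOnCl_const).mul hf.diffContOnCl_minus
  have hH : DiffContOnCl ℂ (fun z => -(fp z * P * (fp z)⁻¹)) (ball 0 1) :=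
    ((hf.diffContOnCl_plus.mul diffContOnCl_const).mul
      (hf.diffContOnCl_plus.matrix_inv hunit_p)).neg
  obtain ⟨C, hC⟩ := Matrix.exists_const_of_eq_comp_conj_on_sphere hG hH fun z hz => by
    have hz1 : ‖z‖ = 1 := by simpa using hz
    refine ((key (sphere_subset_closedBall hz)).1 ?_).symm
    rw [← hf.factor z hz1]
    exact hchiral z hz1
  intro z hz
  exact (key hz).2 ((hC _ (hconj hz)).1.trans (hC z hz).2.symm)

/-- If the symbol `f` anticommutes with a Hermitian unitary `P` on the unit circle, then its
interior extension `f^e(z) = f₋(z̄) f₊(z)` anticommutes with `P` on the whole closed unit disk. -/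
theorem interior_extension_anticommutes_with_chiral_symmetry
    {n : ℕ} (hn : 1 ≤ n) (P : Matrix (Fin n) (Fin n) ℂ)
    (hP : P.IsHermitian) (hP2 : P * P = 1)
    (f fm fp : ℂ → Matrix (Fin n) (Fin n) ℂ)
    (hchiral : ∀ z : ℂ, ‖z‖ = 1 → P * f z * P = -(f z))
    (hf : RightCanonicalFactorizationDatum n f fm fp) :
    ∀ z ∈ closedDisk,
      P * (fm (starRingEnd ℂ z) * fp z) * P = -(fm (starRingEnd ℂ z) * fp z) :=
  interior_extension_anticommutes_with_chiral_symmetry_general P hP2 f fm fp hchiral hf
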